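/- arXiv:1809.06755 — 3 statements merged into one kernel-verified Lean document; each statement's English description precedes it below -/
import Mathlib

section
/- Let A be an integral, local, noetherian algebra over an algebraically closed field k of characteristic p > 0, with residue field k and maximal ideal 𝔪. Then the intersection over all n of the images of the n-th power Frobenius, i.e. { a ∈ A : for every n there exists a_n ∈ A with a = a_n^{p^n} }, equals k. -/
/-!
If `a = b ^ p ^ n` and `b ≡ d (mod 𝔪)` with `d ∈ k`, then `a - d ^ p ^ n = (b - d) ^ p ^ n` lies in
`𝔪 ^ p ^ n ⊆ 𝔪 ^ n`. Since distinct elements of `k` stay distinct modulo `𝔪`, these approximations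
of `a` are all the same element `c ∈ k`, so `a - c ∈ ⋂ 𝔪 ^ n = 0` by Krull's intersection theorem.
Conversely every element of `k` has all `p ^ n`-th roots because `k` is algebraically closed.
-/

open IsLocalRing

theorem Ideal.pow_char_pow_sub_mem_pow {R : Type*} [CommRing R] (p : ℕ) [Fact p.Prime] [CharP R p]
    {I : Ideal R} {x y : R} (h : x - y ∈ I) (n : ℕ) : x ^ p ^ n - y ^ p ^ n ∈ I ^ n := by
  rw [← sub_pow_char_pow]
  exact Ideal.pow_le_pow_right (Nat.lt_pow_self (Fact.out : p.Prime).one_lt).le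
    (Ideal.pow_mem_pow h _)

section LocalAlgebra

variable {k A : Type*} [Field k] [CommRing A] [IsLocalRing A] [Algebra k A]

theorem IsLocalRing.eq_of_algebraMap_sub_mem_maximalIdeal {x y : k}
    (h : algebraMap k A x - algebraMap k A y ∈ maximalIdeal A) : x = y := by
  by_contra hne
  rw [← map_sub, mem_maximalIdeal, mem_nonunits_iff] at h
  exact h ((sub_ne_zero.2 hne).isUnit.map _)

theorem IsLocalRing.exists_algebraMap_eq_of_forall_sub_mem_maximalIdeal_pow [IsNoetherianRing A]
    {a : A} (h : ∀ n, ∃ c : k, a - algebraMap k A c ∈ maximalIdeal A ^ n) :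
    ∃ c : k, algebraMap k A c = a := by
  obtain ⟨c, hc⟩ := h 1
  rw [pow_one] at hc
  have hmem : a - algebraMap k A c ∈ ⨅ n : ℕ, maximalIdeal A ^ n := by
    refine Ideal.mem_iInf.2 fun n => ?_
    obtain ⟨cn, hcn⟩ := h (n + 1)
    have hcn_eq : cn = c := by
      refine eq_of_algebraMap_sub_mem_maximalIdeal (A := A) ?_
      simpa using sub_mem hc (Ideal.pow_le_self n.succ_ne_zero hcn)
    subst hcn_eq
    exact Ideal.pow_le_pow_right n.le_succ hcn
  rw [Ideal.iInf_pow_eq_bot_of_isLocalRing _ (maximalIdeal.isMaximal A).ne_top, Ideal.mem_bot,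
    sub_eq_zero] at hmem
  exact ⟨c, hmem.symm⟩

theorem IsLocalRing.exists_sub_mem_maximalIdeal_pow_of_pow_char_pow_eq (p : ℕ) [Fact p.Prime]
    [CharP A p] (hsurj : Function.Surjective ((residue A).comp (algebraMap k A)))
    {a b : A} {n : ℕ} (hb : b ^ p ^ n = a) :
    ∃ c : k, a - algebraMap k A c ∈ maximalIdeal A ^ n := by
  obtain ⟨d, hd⟩ := hsurj (residue A b)
  have hbd : b - algebraMap k A d ∈ maximalIdeal A := Ideal.Quotient.eq.1 hd.symm
  refine ⟨d ^ p ^ n, ?_⟩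
  simpa [hb] using Ideal.pow_char_pow_sub_mem_pow p hbd n

end LocalAlgebra

theorem stmt_2_general (p : ℕ) [Fact p.Prime] (k : Type*) [Field k] [IsAlgClosed k] [CharP k p]
    (A : Type*) [CommRing A] [IsLocalRing A] [IsNoetherianRing A]
    [Algebra k A] (hres : Function.Bijective
      ((IsLocalRing.residue A).comp (algebraMap k A))) (a : A) :
    (∀ n : ℕ, ∃ b : A, b ^ p ^ n = a) ↔ ∃ c : k, algebraMap k A c = a := by
  have : CharP A p := charP_of_injective_algebraMap (algebraMap k A).injective p
  constructor
  · intro h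
    refine exists_algebraMap_eq_of_forall_sub_mem_maximalIdeal_pow fun n => ?_
    obtain ⟨b, hb⟩ := h n
    exact exists_sub_mem_maximalIdeal_pow_of_pow_char_pow_eq p hres.2 hb
  · rintro ⟨c, rfl⟩ n
    obtain ⟨d, hd⟩ := IsAlgClosed.exists_pow_nat_eq c (pow_pos (Fact.out : p.Prime).pos n)
    exact ⟨algebraMap k A d, by rw [← map_pow, hd]⟩

/-- Lemma 28.06.2016--1 (first part): for an integral, local, noetherian `k`-algebra `A`
with residue field `k`, where `k` is algebraically closed of characteristic `p > 0`,
the set `{a ∈ A : ∀ n, ∃ aₙ, a = aₙ^(p^n)}` equals (the image of) `k`. -/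
theorem stmt_2 (p : ℕ) [Fact p.Prime] (k : Type*) [Field k] [IsAlgClosed k] [CharP k p]
    (A : Type*) [CommRing A] [IsDomain A] [IsLocalRing A] [IsNoetherianRing A]
    [Algebra k A] (hres : Function.Bijective
      ((IsLocalRing.residue A).comp (algebraMap k A))) (a : A) :
    (∀ n : ℕ, ∃ b : A, b ^ p ^ n = a) ↔ ∃ c : k, algebraMap k A c = a :=
  stmt_2_general p k A hres a
end

section
/- Let V be a vector space and W ⊆ V a subspace of dimension r. Let R be a commutative ring and g ∈ Aut_R(V ⊗ R) an automorphism such that Λ^r(W ⊗ R) is mapped into itself by Λ^r(g) inside Λ^r(V ⊗ R). Then g maps W ⊗ R into itself. -/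
/-!
Extend a basis of `W` to a basis `b` of `V`. After base change, `W ⊗ R` is spanned by the part
`b ∘ inl` of the basis `1 ⊗ b`, so `E = R ∙ ω` with `ω` the wedge product of these vectors, and
`Λg ω = a • ω`. The scalar `a` is a unit because `g` is invertible and `ω` has a minor equal to
`1`. Reading off the minors of `y ∧ ω` shows that `W ⊗ R` is exactly the set of `y` with
`y ∧ ω = 0`, and this set is `g`-stable since `g y ∧ a • ω = Λg (y ∧ ω)`.
-/

open TensorProduct ExteriorAlgebra Module Submodule Set Function

universe u

section

variable {R M N : Type*} [CommRing R] [AddCommGroup M] [Module R M] [AddCommGroup N] [Module R N]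

theorem Module.Basis.sumExtend_apply_inl {K V ι : Type*} [Field K] [AddCommGroup V]
    [Module K V] {v : ι → V} (hv : LinearIndependent K v) (i : ι) :
    Basis.sumExtend hv (Sum.inl i) = v i := by
  simp only [Basis.sumExtend, Equiv.trans_def, Basis.coe_reindex, Basis.coe_extend, comp_apply]
  rfl

theorem AlternatingMap.apply_eq_basis_det_smul {I : Type*} [Fintype I] [DecidableEq I]
    (b : Basis I R M) (f : M [⋀^I]→ₗ[R] N) (v : I → M) : f v = b.det v • f b := by
  suffices f = b.det.smulRight (f b) from DFunLike.congr_fun this v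
  refine Basis.ext_alternating b fun u hu => ?_
  let σ : Equiv.Perm I := Equiv.ofBijective u (Finite.injective_iff_bijective.1 hu)
  change f (b ∘ σ) = b.det.smulRight (f b) (b ∘ σ)
  simp [AlternatingMap.map_perm, Basis.det_self]

theorem isUnit_of_apply_eq_smul {f f' : N →ₗ[R] N} {x : N} (hf : f' (f x) = x)
    (φ : N →ₗ[R] R) (hx : φ x = 1) {a : R} (ha : f x = a • x) : IsUnit a := by
  refine IsUnit.of_mul_eq_one (φ (f' x)) ?_
  calc a * φ (f' x) = φ (f' (f x)) := by rw [ha, map_smul, map_smul, smul_eq_mul]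
    _ = 1 := by rw [hf, hx]

namespace ExteriorAlgebra

theorem exteriorPower_eq_span_ιMulti_basis {n : ℕ} (b : Basis (Fin n) R M) :
    ⋀[R]^n M = span R {ιMulti R n ⇑b} := by
  refine le_antisymm ?_ (span_le.2 <| singleton_subset_iff.2 <| ιMulti_range R n ⟨b, rfl⟩)
  rw [← ιMulti_span_fixedDegree, span_le]
  rintro _ ⟨v, rfl⟩
  exact mem_span_singleton.2 ⟨b.det v, (AlternatingMap.apply_eq_basis_det_smul b _ v).symm⟩

theorem map_exteriorPower_span_eq_span_ιMulti {n : ℕ} {v : Fin n → M}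
    (hv : LinearIndependent R v) :
    (⋀[R]^n (span R (range v))).map (map (span R (range v)).subtype).toLinearMap =
      span R {ιMulti R n v} := by
  rw [exteriorPower_eq_span_ιMulti_basis (Basis.span hv), map_span, image_singleton,
    AlgHom.toLinearMap_apply, map_apply_ιMulti]
  congr 3
  funext i
  simp [Basis.span_apply]

variable {I : Type*}

noncomputable def minorCoord (b : Basis I R M) {n : ℕ} (σ : Fin n → I) :
    ExteriorAlgebra R M →ₗ[R] R :=
  liftAlternating <| Pi.single n <|
    Matrix.detRowAlternating.compLinearMap (LinearMap.pi fun i => b.coord (σ i))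

theorem minorCoord_ιMulti (b : Basis I R M) {n : ℕ} (σ : Fin n → I) (v : Fin n → M) :
    minorCoord b σ (ιMulti R n v) = (Matrix.of fun j i => b.repr (v j) (σ i)).det := by
  rw [minorCoord, liftAlternating_apply_ιMulti, Pi.single_eq_same]
  rfl

theorem minorCoord_ιMulti_basis (b : Basis I R M) {n : ℕ} {σ : Fin n → I}
    (hσ : Injective σ) : minorCoord b σ (ιMulti R n (b ∘ σ)) = 1 := by
  suffices (Matrix.of fun j i => b.repr (b (σ j)) (σ i)) = 1 by
    rw [minorCoord_ιMulti, comp_def, this, Matrix.det_one]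
  ext j i
  simp [Finsupp.single_apply_left hσ, Finsupp.single_apply, Matrix.one_apply]

theorem ι_mul_ιMulti {n : ℕ} (y : M) (v : Fin n → M) :
    ι R y * ιMulti R n v = ιMulti R (n + 1) (Fin.cons y v) := by
  rw [ιMulti_succ_apply, Fin.cons_zero]
  rfl

theorem minorCoord_cons_ι_mul_ιMulti (b : Basis I R M) {n : ℕ} {s : Fin n → I}
    (hs : Injective s) {i : I} (hi : i ∉ range s) (y : M) :
    minorCoord b (Fin.cons i s) (ι R y * ιMulti R n (b ∘ s)) = b.repr y i := by
  suffices minorCoord b (Fin.cons i s) ∘ₗ LinearMap.mulRight R (ιMulti R n (b ∘ s)) ∘ₗ ι R =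
      b.coord i from LinearMap.congr_fun this y
  refine b.ext fun m => ?_
  simp only [LinearMap.comp_apply, LinearMap.mulRight_apply, Basis.coord_apply, Basis.repr_self,
    ι_mul_ιMulti]
  by_cases hm : m = i
  · rw [hm, ← Fin.comp_cons, minorCoord_ιMulti_basis b (Fin.cons_injective_iff.2 ⟨hi, hs⟩),
      Finsupp.single_eq_same]
  · rw [Finsupp.single_eq_of_ne (Ne.symm hm), minorCoord_ιMulti]
    refine Matrix.det_eq_zero_of_column_eq_zero 0 fun j => ?_
    cases j using Fin.cases with
    | zero => simpa using Finsupp.single_eq_of_ne (Ne.symm hm)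
    | succ j => simpa using Finsupp.single_eq_of_ne fun h => hi ⟨j, h.symm⟩

theorem ι_mul_ιMulti_eq_zero_of_mem_span {n : ℕ} {v : Fin n → M} {y : M}
    (hy : y ∈ span R (range v)) : ι R y * ιMulti R n v = 0 := by
  suffices span R (range v) ≤ LinearMap.ker (LinearMap.mulRight R (ιMulti R n v) ∘ₗ ι R) from
    this hy
  rw [span_le]
  rintro _ ⟨i, rfl⟩
  rw [SetLike.mem_coe, LinearMap.mem_ker, LinearMap.comp_apply, LinearMap.mulRight_apply,
    ι_mul_ιMulti]
  exact (ιMulti R (n + 1)).map_eq_zero_of_eq _ (i := 0) (j := i.succ) rfl (Fin.succ_ne_zero i).symm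

theorem ι_mul_ιMulti_basis_eq_zero_iff (b : Basis I R M) {n : ℕ} {s : Fin n → I}
    (hs : Injective s) {y : M} :
    ι R y * ιMulti R n (b ∘ s) = 0 ↔ y ∈ span R (range (b ∘ s)) := by
  refine ⟨fun hy => ?_, ι_mul_ιMulti_eq_zero_of_mem_span⟩
  rw [range_comp, Basis.mem_span_image]
  intro i hi
  by_contra his
  rw [Finset.mem_coe, Finsupp.mem_support_iff, ← minorCoord_cons_ι_mul_ιMulti b hs his, hy,
    map_zero] at hi
  exact hi rfl

theorem map_span_le_of_map_ιMulti_mem_span (b : Basis I R M) {n : ℕ} {s : Fin n → I}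
    (hs : Injective s) (g : M ≃ₗ[R] M)
    (hg : map (g : M →ₗ[R] M) (ιMulti R n (b ∘ s)) ∈ span R {ιMulti R n (b ∘ s)}) :
    (span R (range (b ∘ s))).map (g : M →ₗ[R] M) ≤ span R (range (b ∘ s)) := by
  obtain ⟨a, ha⟩ := mem_span_singleton.1 hg
  have hinv : map (g.symm : M →ₗ[R] M) (map (g : M →ₗ[R] M) (ιMulti R n (b ∘ s))) =
      ιMulti R n (b ∘ s) := by
    rw [← AlgHom.comp_apply, map_comp_map, LinearEquiv.symm_comp, map_id, AlgHom.id_apply]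
  have hunit : IsUnit a :=
    isUnit_of_apply_eq_smul (f := (map _).toLinearMap) (f' := (map _).toLinearMap) hinv _
      (minorCoord_ιMulti_basis b hs) ha.symm
  rintro _ ⟨x, hx, rfl⟩
  rw [SetLike.mem_coe, ← ι_mul_ιMulti_basis_eq_zero_iff b hs] at hx
  rw [← ι_mul_ιMulti_basis_eq_zero_iff b hs]
  have hgx := congrArg (map (g : M →ₗ[R] M)) hx
  rw [map_mul, map_apply_ι, ← ha, mul_smul_comm, map_zero] at hgx
  exact hunit.smul_eq_zero.1 hgx

end ExteriorAlgebra

end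

theorem Submodule.exists_basis_baseChange_eq_span {k : Type*} {V : Type u} [Field k]
    [AddCommGroup V] [Module k V] [FiniteDimensional k V] (W : Submodule k V) {r : ℕ}
    (hW : finrank k W = r) (R : Type*) [CommRing R] [Algebra k R] :
    ∃ (κ : Type u) (b : Basis (Fin r ⊕ κ) R (R ⊗[k] V)),
      W.baseChange R = span R (range (b ∘ Sum.inl)) := by
  let bW := finBasisOfFinrankEq k W hW
  have hv : LinearIndependent k (W.subtype ∘ bW) := bW.linearIndependent.map' _ W.ker_subtype
  have hW_span : span k (range (W.subtype ∘ bW)) = W := by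
    rw [range_comp, ← map_span, bW.span_eq, map_top, range_subtype]
  refine ⟨_, (Basis.sumExtend hv).baseChange R, ?_⟩
  conv_lhs => rw [← hW_span]
  rw [baseChange_span, ← range_comp]
  congr 2
  funext i
  simp only [comp_apply, Basis.baseChange_apply, Basis.sumExtend_apply_inl, mk_apply,
    subtype_apply]

/-- Waterhouse's linear algebra lemma: let `V` be a finite-dimensional vector space over a
field `k`, `W ⊆ V` a subspace of dimension `r`, `R` a commutative `k`-algebra, and
`g` an `R`-linear automorphism of `V ⊗ R`.  If the `r`-th exterior power of `g` maps
`Λ^r (W ⊗ R)` (viewed inside the exterior algebra of `V ⊗ R`) into itself, then `g`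
maps `W ⊗ R` into itself. -/
theorem stmt_10 (k : Type*) [Field k] (V : Type*) [AddCommGroup V] [Module k V]
    [FiniteDimensional k V] (r : ℕ) (W : Submodule k V) (hW : Module.finrank k W = r)
    (R : Type*) [CommRing R] [Algebra k R]
    (g : (R ⊗[k] V) ≃ₗ[R] (R ⊗[k] V))
    (E : Submodule R (ExteriorAlgebra R (R ⊗[k] V)))
    (hE : E = Submodule.map (ExteriorAlgebra.map (W.baseChange R).subtype).toLinearMap
      (⋀[R]^r (W.baseChange R) : Submodule R (ExteriorAlgebra R (W.baseChange R))))
    (hstab : Submodule.map (ExteriorAlgebra.map (g : R ⊗[k] V →ₗ[R] R ⊗[k] V)).toLinearMap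
      E ≤ E) :
    Submodule.map (g : R ⊗[k] V →ₗ[R] R ⊗[k] V) (W.baseChange R) ≤ W.baseChange R := by
  obtain ⟨_, b, hWb⟩ := W.exists_basis_baseChange_eq_span hW R
  rw [hWb, map_exteriorPower_span_eq_span_ιMulti
    (b.linearIndependent.comp _ Sum.inl_injective)] at hE
  subst hE
  rw [hWb]
  exact map_span_le_of_map_ιMulti_mem_span b Sum.inl_injective g
    (hstab (mem_map_of_mem (mem_span_singleton_self _)))
end

section
/- Let T be a rigid tensor category over a field k and suppose V ∈ T satisfies V^{⊗(s+1)} ⊕ ⊕_{i=0}^{s} (V^{⊗ i})^{⊕ a_i} ≅ ⊕_{i=0}^{s} (V^{⊗ i})^{⊕ b_i} for nonnegative integers a_i, b_i. Set T_V = V^{⊗ 0} ⊕ V^{⊗ 1} ⊕ ⋯ ⊕ V^{⊗ s}. Then for every ℓ ∈ ℕ there exist m ∈ ℕ and a monomorphism V^{⊗ ℓ} → T_V^{⊕ m}. -/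
open CategoryTheory CategoryTheory.Limits MonoidalCategory

attribute [local instance] CategoryTheory.Abelian.hasFiniteBiproducts

universe u v

/-- Iterated tensor power `V^{⊗ n}` in a monoidal category. -/
def tpow {C : Type*} [Category C] [MonoidalCategory C] (V : C) : ℕ → C
  | 0 => 𝟙_ C
  | n + 1 => tpow V n ⊗ V

section Aux

variable {C : Type u} [Category.{v} C] [Abelian C] [MonoidalCategory C]
  [RightRigidCategory C]

omit [MonoidalCategory C] [RightRigidCategory C] in
/-- `biproduct.map` of a family of split monos is a split mono. -/
lemma aux_isSplitMono_biproduct_map {J : Type} [Fintype J] {F G : J → C}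
    (h : ∀ j, F j ⟶ G j) [∀ j, IsSplitMono (h j)] : IsSplitMono (biproduct.map h) := by
  refine IsSplitMono.mk' ⟨biproduct.map fun j => retraction (h j), ?_⟩
  ext j
  simp [biproduct.map_π, biproduct.map_π_assoc, IsSplitMono.id (h j)]

/-- Tensoring on the right is additive in a right rigid abelian monoidal category. -/
lemma aux_tensorRight_additive (V : C) : (tensorRight V).Additive := by
  haveI : (tensorRight V).IsLeftAdjoint := ⟨_, ⟨tensorRightAdjunction V (Vᘁ)⟩⟩
  haveI : HasBinaryBiproducts C := hasBinaryBiproducts_of_finite_biproducts C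
  haveI : PreservesBinaryBiproducts (tensorRight V) :=
    preservesBinaryBiproducts_of_preservesBinaryCoproducts _
  exact Functor.additive_of_preservesBinaryBiproducts _

end Aux

/-- Lemma 17.01.2019--1 (1): let `T` be a `k`-linear abelian rigid tensor category and
let `V ∈ T` satisfy the integrality relation
`V^{⊗(s+1)} ⊕ ⊕ᵢ (V^{⊗ i})^{⊕ aᵢ} ≅ ⊕ᵢ (V^{⊗ i})^{⊕ bᵢ}`.
Set `T_V = V^{⊗0} ⊕ ⋯ ⊕ V^{⊗ s}`.  Then for every `ℓ` there are `m` and a monomorphism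
`V^{⊗ ℓ} → T_V^{⊕ m}`. -/
theorem stmt_14 (k : Type*) [Field k] (C : Type u) [Category.{v} C]
    [Abelian C] [CategoryTheory.Linear k C]
    [MonoidalCategory C] [RightRigidCategory C]
    (V : C) (s : ℕ) (a b : Fin (s + 1) → ℕ)
    (hV : Nonempty
      ((tpow V (s + 1) ⊞ ⨁ fun i : Fin (s + 1) => ⨁ fun _ : Fin (a i) => tpow V i)
        ≅ ⨁ fun i : Fin (s + 1) => ⨁ fun _ : Fin (b i) => tpow V i))
    (T : C) (hT : T = ⨁ fun i : Fin (s + 1) => tpow V (i : ℕ)) (ℓ : ℕ) :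
    ∃ (m : ℕ) (f : tpow V ℓ ⟶ ⨁ fun _ : Fin m => T), Mono f := by
  haveI : HasBinaryBiproducts C := hasBinaryBiproducts_of_finite_biproducts C
  haveI : (tensorRight V).Additive := aux_tensorRight_additive V
  -- the key predicate: `X` admits a split mono into some `T^{⊕ m}`.
  let Good : C → Prop := fun X =>
    ∃ (m : ℕ) (f : X ⟶ ⨁ fun _ : Fin m => T), IsSplitMono f
  -- closure under split monos
  have good_of_split : ∀ {X Y : C} (g : X ⟶ Y), IsSplitMono g → Good Y → Good X := by
    rintro X Y g hg ⟨m, f, hf⟩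
    exact ⟨m, g ≫ f, inferInstance⟩
  -- `T` itself is good
  have good_T : Good T := ⟨1, biproduct.ι (fun _ : Fin 1 => T) 0, inferInstance⟩
  -- closure under finite biproducts
  have good_bi : ∀ (n : ℕ) (F : Fin n → C), (∀ j, Good (F j)) → Good (⨁ F) := by
    intro n F hF
    choose m f hf using hF
    haveI := hf
    haveI : IsSplitMono (biproduct.map f) := aux_isSplitMono_biproduct_map f
    let e₁ : (⨁ fun j => ⨁ fun _ : Fin (m j) => T) ≅
        ⨁ fun p : Σ j : Fin n, Fin (m j) => T :=
      biproductBiproductIso (fun j => Fin (m j)) (fun _ _ => T)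
    let e₂ : (⨁ fun p : Σ j : Fin n, Fin (m j) => T) ≅
        ⨁ fun _ : Fin (Fintype.card (Σ j : Fin n, Fin (m j))) => T :=
      biproduct.whiskerEquiv (Fintype.equivFin _) (fun _ => Iso.refl T)
    exact ⟨_, biproduct.map f ≫ e₁.hom ≫ e₂.hom, inferInstance⟩
  -- small tensor powers are good
  have good_pow : ∀ i : ℕ, i ≤ s → Good (tpow V i) := by
    intro i hi
    refine good_of_split (biproduct.ι (fun j : Fin (s + 1) => tpow V (j : ℕ))
      ⟨i, by omega⟩ ≫ eqToHom hT.symm) inferInstance good_T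
  -- `V^{⊗ (s+1)}` is good, by the integrality relation
  have good_s1 : Good (tpow V (s + 1)) := by
    obtain ⟨e⟩ := hV
    refine good_of_split (biprod.inl ≫ e.hom) inferInstance ?_
    exact good_bi _ _ fun i => good_bi _ _ fun _ => good_pow i (by omega)
  -- `T ⊗ V` is good
  have good_TV : Good (T ⊗ V) := by
    have e : T ⊗ V ≅ ⨁ ((tensorRight V).obj ∘ fun i : Fin (s + 1) => tpow V (i : ℕ)) :=
      (tensorRight V).mapIso (eqToIso hT) ≪≫
        (tensorRight V).mapBiproduct (fun i : Fin (s + 1) => tpow V (i : ℕ))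
    refine good_of_split e.hom inferInstance ?_
    refine good_bi _ _ fun j => ?_
    show Good (tpow V (j : ℕ) ⊗ V)
    have : tpow V (j : ℕ) ⊗ V = tpow V ((j : ℕ) + 1) := rfl
    rw [this]
    rcases Nat.lt_or_ge (j : ℕ) s with h | h
    · exact good_pow _ (by omega)
    · have : (j : ℕ) = s := by omega
      rw [this]
      exact good_s1
  -- goodness is preserved by tensoring with `V`
  have good_tensor : ∀ X : C, Good X → Good (X ⊗ V) := by
    rintro X ⟨m, f, hf⟩
    haveI := hf
    have e : (⨁ fun _ : Fin m => T) ⊗ V ≅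
        ⨁ ((tensorRight V).obj ∘ fun _ : Fin m => T) :=
      (tensorRight V).mapBiproduct (fun _ : Fin m => T)
    refine good_of_split ((tensorRight V).map f ≫ e.hom) inferInstance ?_
    exact good_bi _ _ fun _ => good_TV
  -- conclude by induction
  have main : Good (tpow V ℓ) := by
    induction ℓ with
    | zero => exact good_pow 0 (Nat.zero_le s)
    | succ n ih => exact good_tensor _ ih
  obtain ⟨m, f, hf⟩ := main
  haveI := hf
  exact ⟨m, f, inferInstance⟩
end
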